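/- arXiv:1110.3718 — 3 statements merged into one kernel-verified Lean document; each statement's English description precedes it below -/
import Mathlib

section
/- Let X be a finite CW-complex (or finite simplicial complex) and let ρ : U × π₁(X,x₀) → GL(n,C) be a family of representations depending continuously on a parameter u ∈ U, where U is a topological space. For each fixed degree m, the function F : U → ℤ given by F(u) = dim_C H_m(X; ρ_u) (homology with local coefficients in ρ_u) is upper semicontinuous: limsup_{u→u₀} F(u) ≤ F(u₀) for every u₀ ∈ U. -/
open Matrix

/-- Given a representation `ρ : G → GL(N, ℂ)` and a matrix `D` over the integral group ring
`ℤ[G]` (a boundary matrix of the chain complex of the universal cover of a finite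
CW-complex), `blockMatrix ρ D` is the complex block matrix obtained by applying `ρ`
entrywise; it is the matrix of the induced boundary map of the chain complex
`V ⊗_{ℂ[G]} C_*(X̃; ℤ)` computing homology with local coefficients. -/
noncomputable def blockMatrix {G : Type} [Group G] {N a b : ℕ}
    (ρ : G →* GL (Fin N) ℂ) (D : Matrix (Fin a) (Fin b) (MonoidAlgebra ℤ G)) :
    Matrix (Fin a × Fin N) (Fin b × Fin N) ℂ :=
  fun p q => (D p.1 q.1).coeff.sum fun g z =>
    (z : ℂ) * ((ρ g : Matrix (Fin N) (Fin N) ℂ) p.2 q.2)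

/-!
Rank is lower semicontinuous: a maximal linearly independent set of rows of `A₀` stays
linearly independent for all `A` near `A₀`, since linear independence of finitely many
vectors is an open condition. The block matrices of `∂ₘ ⊗ ρ_u` and `∂ₘ₊₁ ⊗ ρ_u` depend
continuously on `u`, and `(r₁N - rank ∂ₘ) - rank ∂ₘ₊₁` is antitone in both ranks.
-/

open Filter Topology

namespace Matrix

universe u

variable {m : Type u} {n : Type*} [Fintype m] [Fintype n]

theorem exists_linearIndependent_rows_card_eq_rank {K : Type*} [Field K] (A : Matrix m n K) :
    ∃ (κ : Type u) (_ : Fintype κ) (a : κ → m),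
      LinearIndependent K (A.submatrix a id).row ∧ Fintype.card κ = A.rank := by
  obtain ⟨κ, a, ha, hspan, hli⟩ := exists_linearIndependent' K A.row
  have : Fintype κ := Fintype.ofInjective a ha
  refine ⟨κ, this, a, hli, ?_⟩
  rw [rank_eq_finrank_span_row, ← hspan, ← finrank_span_eq_card hli]

theorem eventually_rank_le {𝕜 : Type*} [NontriviallyNormedField 𝕜] [CompleteSpace 𝕜]
    (A₀ : Matrix m n 𝕜) : ∀ᶠ A in 𝓝 A₀, A₀.rank ≤ A.rank := by
  obtain ⟨κ, _, a, hli, hcard⟩ := A₀.exists_linearIndependent_rows_card_eq_rank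
  have hrows : Continuous fun A : Matrix m n 𝕜 => (A.submatrix a id).row :=
    continuous_pi fun k => continuous_apply (a k)
  filter_upwards [hrows.continuousAt.eventually hli.eventually] with A hA
  calc A₀.rank = (A.submatrix a id).rank := by rw [hA.rank_matrix, hcard]
    _ ≤ A.rank := A.rank_submatrix_le a id

end Matrix

theorem continuous_blockMatrix {U : Type} [TopologicalSpace U] {G : Type} [Group G] {N a b : ℕ}
    (ρ : U → G →* GL (Fin N) ℂ)
    (hρ : ∀ g : G, Continuous fun u => ((ρ u g : GL (Fin N) ℂ) : Matrix (Fin N) (Fin N) ℂ))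
    (D : Matrix (Fin a) (Fin b) (MonoidAlgebra ℤ G)) :
    Continuous fun u => blockMatrix (ρ u) D :=
  continuous_pi fun p => continuous_pi fun q =>
    continuous_finsetSum _ fun g _ => continuous_const.mul ((hρ g).matrix_elem p.2 q.2)

/-- `D₁ = ∂ₘ` and `D₂ = ∂ₘ₊₁` are the boundary matrices over `ℤ[G]` of the cellular chain complex
of the universal cover of `X`; the function is `u ↦ dim ker(∂ₘ ⊗ ρ_u) - rank(∂ₘ₊₁ ⊗ ρ_u)`. -/
theorem homology_dim_upperSemicontinuous_general
    {U : Type} [TopologicalSpace U] {G : Type} [Group G] {N : ℕ}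
    (ρ : U → G →* GL (Fin N) ℂ)
    (hρ : ∀ g : G, Continuous fun u => ((ρ u g : GL (Fin N) ℂ) : Matrix (Fin N) (Fin N) ℂ))
    {r₀ r₁ r₂ : ℕ}
    (D₁ : Matrix (Fin r₀) (Fin r₁) (MonoidAlgebra ℤ G))
    (D₂ : Matrix (Fin r₁) (Fin r₂) (MonoidAlgebra ℤ G)) :
    UpperSemicontinuous fun u =>
      (r₁ * N - (blockMatrix (ρ u) D₁).rank) - (blockMatrix (ρ u) D₂).rank := by
  intro u₀ y hy
  have h₁ := ((continuous_blockMatrix ρ hρ D₁).tendsto u₀).eventually (eventually_rank_le _)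
  have h₂ := ((continuous_blockMatrix ρ hρ D₂).tendsto u₀).eventually (eventually_rank_le _)
  filter_upwards [h₁, h₂] with u hu₁ hu₂
  dsimp only at hy ⊢
  omega

/-- Upper semicontinuity of the dimension of homology with local coefficients.  A finite
CW-complex `X` with fundamental group `G` determines a chain complex of finitely generated
free `ℤ[G]`-modules (the cellular chain complex of the universal cover), with boundary
matrices `D₁ = ∂_m` (from degree `m` to `m−1`) and `D₂ = ∂_{m+1}` over `ℤ[G]` satisfying
`D₁ D₂ = 0`.  For a family of representations `ρ_u : G → GL(N, ℂ)` depending continuously on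
`u ∈ U`, the function
`F(u) = dim_ℂ H_m(X; ρ_u) = dim ker(∂_m ⊗ ρ_u) − rank(∂_{m+1} ⊗ ρ_u)`
is upper semicontinuous. -/
theorem homology_dim_upperSemicontinuous
    {U : Type} [TopologicalSpace U] {G : Type} [Group G] {N : ℕ}
    (ρ : U → G →* GL (Fin N) ℂ)
    (hρ : ∀ g : G, Continuous fun u => ((ρ u g : GL (Fin N) ℂ) : Matrix (Fin N) (Fin N) ℂ))
    {r₀ r₁ r₂ : ℕ}
    (D₁ : Matrix (Fin r₀) (Fin r₁) (MonoidAlgebra ℤ G))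
    (D₂ : Matrix (Fin r₁) (Fin r₂) (MonoidAlgebra ℤ G))
    (hDD : D₁ * D₂ = 0) :
    UpperSemicontinuous fun u =>
      (r₁ * N - (blockMatrix (ρ u) D₁).rank) - (blockMatrix (ρ u) D₂).rank :=
  homology_dim_upperSemicontinuous_general ρ hρ D₁ D₂
end

section
/- Let δ > 0 and let μ be a positive Radon measure supported in {z ∈ C : |z| ≥ e^{δ/2}} satisfying μ({|z| ≤ R}) ≤ C R⁴ for all large R. Then the double series ∑_{k=5}^{∞} ∫ |log|1 − z^{-k}|| dμ(z) converges. -/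
/-!
For `‖z‖ ≥ r := exp (δ / 2) > 1` and `w = z⁻¹ ^ (k + 5)` we have `‖w‖ ≤ r⁻¹ ^ k ‖z‖⁻⁵ ≤ r⁻⁵ < 1`,
and `|log ‖1 - w‖| ≤ ‖w‖ / (1 - ‖w‖)`. Summing the geometric series in `k` reduces the claim to
`∫ ‖z‖⁻⁵ dμ < ∞`. With `R = max R₀ r`, every `z` with `‖z‖ ≥ r` lies in a ball of radius `R 2ⁿ`
on which `‖z‖⁻⁵ ≤ (r 2ⁿ / 2)⁻⁵`; the growth bound `μ {‖z‖ ≤ R 2ⁿ} ≤ C (R 2ⁿ)⁴` then makes the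
contribution of the `n`-th ball decay like `2⁻ⁿ`.
-/

open MeasureTheory

lemma abs_log_norm_one_sub_le {R : Type*} [SeminormedRing R] [NormOneClass R] {w : R}
    (hw : ‖w‖ < 1) : |Real.log ‖1 - w‖| ≤ ‖w‖ / (1 - ‖w‖) := by
  have hpos : 0 < 1 - ‖w‖ := sub_pos.mpr hw
  have hlower : 1 - ‖w‖ ≤ ‖1 - w‖ := by simpa using norm_sub_norm_le (1 : R) w
  have hupper : ‖1 - w‖ ≤ 1 + ‖w‖ := by simpa using norm_sub_le (1 : R) w
  have hquot : ‖w‖ ≤ ‖w‖ / (1 - ‖w‖) :=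
    (le_div_iff₀ hpos).mpr (by nlinarith [norm_nonneg w])
  rw [abs_le]
  constructor
  · calc -(‖w‖ / (1 - ‖w‖)) = 1 - (1 - ‖w‖)⁻¹ := by field_simp; ring
      _ ≤ Real.log (1 - ‖w‖) := Real.one_sub_inv_le_log_of_pos hpos
      _ ≤ Real.log ‖1 - w‖ := Real.log_le_log hpos hlower
  · calc Real.log ‖1 - w‖ ≤ ‖1 - w‖ - 1 := Real.log_le_sub_one_of_pos (hpos.trans_le hlower)
      _ ≤ ‖w‖ / (1 - ‖w‖) := by linarith

lemma abs_log_norm_one_sub_inv_pow_le {𝕜 : Type*} [NormedDivisionRing 𝕜] {r : ℝ} (hr : 1 < r)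
    {z : 𝕜} (hz : r ≤ ‖z‖) (k : ℕ) {m : ℕ} (hm : m ≠ 0) :
    |Real.log ‖1 - (z ^ (k + m))⁻¹‖| ≤ (1 - r⁻¹ ^ m)⁻¹ * r⁻¹ ^ k * ‖z‖⁻¹ ^ m := by
  have hq : r⁻¹ < 1 := inv_lt_one_of_one_lt₀ hr
  have hzq : ‖z‖⁻¹ ≤ r⁻¹ := inv_anti₀ (by linarith) hz
  have hqm : r⁻¹ ^ m < 1 := pow_lt_one₀ (by positivity) hq hm
  set w := (z ^ (k + m))⁻¹
  have hw : ‖w‖ = ‖z‖⁻¹ ^ k * ‖z‖⁻¹ ^ m := by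
    simp only [w, pow_add, norm_inv, norm_mul, norm_pow, mul_inv, inv_pow]
  have hwm : ‖w‖ ≤ r⁻¹ ^ k * ‖z‖⁻¹ ^ m := by
    rw [hw]; gcongr
  have hwq : ‖w‖ ≤ r⁻¹ ^ m := by
    rw [hw]
    calc ‖z‖⁻¹ ^ k * ‖z‖⁻¹ ^ m ≤ ‖z‖⁻¹ ^ m :=
          mul_le_of_le_one_left (by positivity) (pow_le_one₀ (by positivity) (hzq.trans hq.le))
      _ ≤ r⁻¹ ^ m := by gcongr
  calc |Real.log ‖1 - w‖| ≤ ‖w‖ / (1 - ‖w‖) := abs_log_norm_one_sub_le (hwq.trans_lt hqm)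
    _ ≤ (r⁻¹ ^ k * ‖z‖⁻¹ ^ m) / (1 - r⁻¹ ^ m) := by gcongr
    _ = (1 - r⁻¹ ^ m)⁻¹ * r⁻¹ ^ k * ‖z‖⁻¹ ^ m := by ring

lemma exists_le_mul_two_pow_and_inv_le {r R x : ℝ} (hr : 0 < r) (hrR : r ≤ R) (hrx : r ≤ x) :
    ∃ n : ℕ, x ≤ R * 2 ^ n ∧ x⁻¹ ≤ 2 * r⁻¹ * (2 ^ n)⁻¹ := by
  suffices ∃ n : ℕ, x ≤ R * 2 ^ n ∧ r * 2 ^ n ≤ 2 * x by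
    obtain ⟨n, hxn, hnx⟩ := this
    refine ⟨n, hxn, ?_⟩
    rw [inv_le_iff_one_le_mul₀ (hr.trans_le hrx)]
    calc (1 : ℝ) = 2 * r⁻¹ * (2 ^ n)⁻¹ * (r * 2 ^ n / 2) := by field_simp
      _ ≤ 2 * r⁻¹ * (2 ^ n)⁻¹ * x := by gcongr; linarith
  rcases le_or_gt x R with hxR | hRx
  · exact ⟨0, by simpa using hxR, by simp only [pow_zero]; linarith⟩
  · have hR : 0 < R := hr.trans_le hrR
    obtain ⟨n, hn, hn'⟩ := exists_nat_pow_near ((one_le_div hR).mpr hRx.le) one_lt_two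
    refine ⟨n + 1, (div_le_iff₀' hR).mp hn'.le, ?_⟩
    calc r * 2 ^ (n + 1) ≤ R * 2 ^ (n + 1) := by gcongr
      _ = 2 * (R * 2 ^ n) := by ring
      _ ≤ 2 * x := by gcongr; exact (le_div_iff₀' hR).mp hn

lemma inv_two_pow_pow_mul_mul_two_pow_pow_le {p s : ℕ} (hps : p < s) {R : ℝ} (hR : 0 ≤ R)
    (n : ℕ) : ((2 : ℝ) ^ n)⁻¹ ^ s * (R * 2 ^ n) ^ p ≤ R ^ p * 2⁻¹ ^ n := by
  obtain ⟨t, rfl⟩ := Nat.exists_eq_add_of_lt hps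
  have hx1 : ((2 : ℝ) ^ n)⁻¹ ≤ 1 := inv_le_one_of_one_le₀ (one_le_pow₀ one_le_two)
  calc ((2 : ℝ) ^ n)⁻¹ ^ (p + t + 1) * (R * 2 ^ n) ^ p = R ^ p * ((2 : ℝ) ^ n)⁻¹ ^ (t + 1) := by
        rw [mul_pow, add_assoc p, pow_add, inv_pow (2 ^ n) p]
        field_simp
    _ ≤ R ^ p * (2 ^ n)⁻¹ := by
        gcongr
        exact pow_le_of_le_one (by positivity) hx1 t.succ_ne_zero
    _ = R ^ p * 2⁻¹ ^ n := by rw [inv_pow]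

lemma lintegral_norm_inv_pow_lt_top {E : Type*} [SeminormedAddCommGroup E] [MeasurableSpace E]
    [OpensMeasurableSpace E] {μ : Measure E} {r C R₀ : ℝ} {p s : ℕ} (hr : 0 < r) (hps : p < s)
    (hC : 0 ≤ C)
    (hsupp : μ {z | ‖z‖ < r} = 0)
    (hgrowth : ∀ R : ℝ, R₀ ≤ R → μ {z | ‖z‖ ≤ R} ≤ ENNReal.ofReal (C * R ^ p)) :
    ∫⁻ z, ENNReal.ofReal (‖z‖⁻¹ ^ s) ∂μ < ⊤ := by
  set R := max R₀ r
  have hR : 0 < R := hr.trans_le (le_max_right _ _)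
  set K := (2 * r⁻¹) ^ s with hK
  let ball (n : ℕ) : Set E := {z | ‖z‖ ≤ R * 2 ^ n}
  have hball (n : ℕ) : MeasurableSet (ball n) :=
    measurableSet_le continuous_norm.measurable measurable_const
  have hdom : ∀ᵐ z ∂μ, ENNReal.ofReal (‖z‖⁻¹ ^ s)
      ≤ ∑' n, (ball n).indicator (fun _ => ENNReal.ofReal (K * ((2 ^ n)⁻¹) ^ s)) z := by
    filter_upwards [measure_eq_zero_iff_ae_notMem.mp hsupp] with z hz
    obtain ⟨n, hzn, hnz⟩ :=
      exists_le_mul_two_pow_and_inv_le hr (le_max_right R₀ r) (not_lt.mp hz)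
    refine le_trans ?_ (ENNReal.le_tsum n)
    rw [Set.indicator_of_mem (show z ∈ ball n from hzn), hK, ← mul_pow]
    exact ENNReal.ofReal_le_ofReal (pow_le_pow_left₀ (by positivity) hnz s)
  have hterm (n : ℕ) : ENNReal.ofReal (K * ((2 ^ n)⁻¹) ^ s) * μ (ball n)
      ≤ ENNReal.ofReal (K * C * (R ^ p * 2⁻¹ ^ n)) := by
    have hRn : R₀ ≤ R * 2 ^ n :=
      (le_max_left R₀ r).trans (le_mul_of_one_le_right hR.le (one_le_pow₀ one_le_two))
    calc _ ≤ ENNReal.ofReal (K * ((2 ^ n)⁻¹) ^ s) * ENNReal.ofReal (C * (R * 2 ^ n) ^ p) := by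
          gcongr
          exact hgrowth _ hRn
      _ = ENNReal.ofReal (K * C * (((2 ^ n)⁻¹) ^ s * (R * 2 ^ n) ^ p)) := by
          rw [← ENNReal.ofReal_mul (by positivity), mul_mul_mul_comm]
      _ ≤ _ := ENNReal.ofReal_le_ofReal (mul_le_mul_of_nonneg_left
          (inv_two_pow_pow_mul_mul_two_pow_pow_le hps hR.le n) (by positivity))
  calc ∫⁻ z, ENNReal.ofReal (‖z‖⁻¹ ^ s) ∂μ
      ≤ ∫⁻ z, ∑' n, (ball n).indicator (fun _ => ENNReal.ofReal (K * ((2 ^ n)⁻¹) ^ s)) z ∂μ :=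
        lintegral_mono_ae hdom
    _ = ∑' n, ENNReal.ofReal (K * ((2 ^ n)⁻¹) ^ s) * μ (ball n) := by
        rw [lintegral_tsum fun n => (measurable_const.indicator (hball n)).aemeasurable]
        simp only [lintegral_indicator_const (hball _)]
    _ ≤ ∑' n, ENNReal.ofReal (K * C * (R ^ p * 2⁻¹ ^ n)) := ENNReal.tsum_le_tsum hterm
    _ < ⊤ := by
        rw [← ENNReal.ofReal_tsum_of_nonneg (fun n => by positivity)
          (((summable_geometric_of_lt_one (by norm_num) (by norm_num)).mul_left _).mul_left _)]
        exact ENNReal.ofReal_lt_top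

lemma lintegral_abs_log_norm_one_sub_inv_pow_le {𝕜 : Type*} [NormedDivisionRing 𝕜]
    [MeasurableSpace 𝕜] {μ : Measure 𝕜} {r : ℝ} (hr : 1 < r) (hsupp : μ {z | ‖z‖ < r} = 0)
    (k : ℕ) {m : ℕ} (hm : m ≠ 0) :
    ∫⁻ z, ENNReal.ofReal |Real.log ‖1 - (z ^ (k + m))⁻¹‖| ∂μ
      ≤ ENNReal.ofReal ((1 - r⁻¹ ^ m)⁻¹ * r⁻¹ ^ k) * ∫⁻ z, ENNReal.ofReal (‖z‖⁻¹ ^ m) ∂μ := by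
  rw [← lintegral_const_mul' _ _ ENNReal.ofReal_ne_top]
  refine lintegral_mono_ae ?_
  filter_upwards [measure_eq_zero_iff_ae_notMem.mp hsupp] with z hz
  rw [← ENNReal.ofReal_mul' (by positivity)]
  exact ENNReal.ofReal_le_ofReal (abs_log_norm_one_sub_inv_pow_le hr (not_lt.mp hz) k hm)

theorem log_series_convergent_general (δ C R₀ : ℝ) (hδ : 0 < δ) (hC : 0 < C)
    (μ : Measure ℂ)
    (hsupp : μ {z : ℂ | ‖z‖ < Real.exp (δ / 2)} = 0)
    (hgrowth : ∀ R : ℝ, R₀ ≤ R → μ {z : ℂ | ‖z‖ ≤ R} ≤ ENNReal.ofReal (C * R ^ 4)) :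
    (∑' k : ℕ, ∫⁻ z, ENNReal.ofReal |Real.log ‖1 - (z ^ (k + 5))⁻¹‖| ∂μ) < ⊤ := by
  set r := Real.exp (δ / 2)
  have hr : 1 < r := Real.one_lt_exp_iff.mpr (by positivity)
  set c : ℕ → ℝ := fun k => (1 - r⁻¹ ^ 5)⁻¹ * r⁻¹ ^ k
  have hc : Summable c :=
    (summable_geometric_of_lt_one (by positivity) (inv_lt_one_of_one_lt₀ hr)).mul_left _
  have hc_nonneg (k : ℕ) : 0 ≤ c k :=
    have hq5 : r⁻¹ ^ 5 < 1 := pow_lt_one₀ (by positivity) (inv_lt_one_of_one_lt₀ hr) (by norm_num)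
    mul_nonneg (inv_nonneg.mpr (sub_nonneg.mpr hq5.le)) (by positivity)
  calc _ ≤ ∑' k, ENNReal.ofReal (c k) * ∫⁻ z, ENNReal.ofReal (‖z‖⁻¹ ^ 5) ∂μ :=
        ENNReal.tsum_le_tsum fun k =>
          lintegral_abs_log_norm_one_sub_inv_pow_le hr hsupp k (by norm_num)
    _ = ENNReal.ofReal (∑' k, c k) * ∫⁻ z, ENNReal.ofReal (‖z‖⁻¹ ^ 5) ∂μ := by
        rw [ENNReal.tsum_mul_right, ENNReal.ofReal_tsum_of_nonneg hc_nonneg hc]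
    _ < ⊤ := ENNReal.mul_lt_top ENNReal.ofReal_lt_top
        (lintegral_norm_inv_pow_lt_top (by positivity) (by norm_num : 4 < 5) hC.le hsupp hgrowth)

/-- Let `δ > 0` and let `μ` be a positive Radon measure supported in `{|z| ≥ e^{δ/2}}`
with `μ({|z| ≤ R}) ≤ C R⁴` for all large `R`.  Then the double series
`∑_{k=5}^∞ ∫ | log|1 − z^{-k}| | dμ(z)` converges. -/
theorem log_series_convergent (δ C R₀ : ℝ) (hδ : 0 < δ) (hC : 0 < C)
    (μ : Measure ℂ) (hμ : IsLocallyFiniteMeasure μ)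
    (hsupp : μ {z : ℂ | ‖z‖ < Real.exp (δ / 2)} = 0)
    (hgrowth : ∀ R : ℝ, R₀ ≤ R → μ {z : ℂ | ‖z‖ ≤ R} ≤ ENNReal.ofReal (C * R ^ 4)) :
    (∑' k : ℕ, ∫⁻ z, ENNReal.ofReal |Real.log ‖1 - (z ^ (k + 5))⁻¹‖| ∂μ) < ⊤ :=
  log_series_convergent_general δ C R₀ hδ hC μ hsupp hgrowth
end

section
/- Let ψ be holomorphic on the open unit disk D with ψ(0) = 0 and ψ'(0) = 1. Then for every integer N ≥ 1, the linear span of the functions {ψ(z^k)/z^N : k ≥ N} is dense in the space H(D) of all holomorphic functions on D with the topology of uniform convergence on compact sets. -/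
/-!
Write `ψ w = w + w² σ w` with `σ` holomorphic. Suppose `z^N g - z^p u` lies in the span of the
`ψ (z^k)`, `k ≥ N`. Expanding `u = ∑_{j<p} b_j z^j + z^p v` and subtracting
`∑_{j<p} b_j ψ (z^(p+j)) = z^p ∑_{j<p} b_j z^j + z^(2p) (…)` leaves `z^N g - z^(2p) u'`
in the span: the order doubles. With `M` a bound for `σ`, Cauchy's estimates on the circle
`|z| = ρ` give `sup |u'| ≤ (1 + p (1 + M)) ρ^(-p) sup |u|`. On a smaller disc `|z| ≤ r` the
error `g - h = z^(p-N) u` is at most `r^(-N) · r^p sup |u|`, and at each doubling this weighted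
bound `r^p sup |u|` is multiplied by `(1 + p (1 + M)) (r/ρ)^p → 0`.
-/

open Metric Set Filter Topology Finset Nat

theorem DifferentiableOn.exists_eq_sum_add_pow_mul {F : ℂ → ℂ} {U : Set ℂ} (hU : IsOpen U)
    (h0 : (0 : ℂ) ∈ U) (hF : DifferentiableOn ℂ F U) (n : ℕ) :
    ∃ H : ℂ → ℂ, DifferentiableOn ℂ H U ∧
      ∀ z, F z = ∑ i ∈ range n, iteratedDeriv i F 0 / i ! * z ^ i + z ^ n * H z := by
  obtain ⟨H, hH0, hH⟩ := (hF.analyticAt (hU.mem_nhds h0)).exists_eq_sum_add_pow_mul n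
  set P : ℂ → ℂ := fun z => ∑ i ∈ range n, iteratedDeriv i F 0 / i ! * z ^ i
  have hFPH : ∀ z, F z = P z + z ^ n * H z := fun z => by
    simpa [P, smul_eq_mul, div_mul_eq_mul_div, mul_comm, mul_div_assoc] using hH z
  refine ⟨H, fun z hz => ?_, hFPH⟩
  rcases eq_or_ne z 0 with rfl | hz0
  · exact hH0.differentiableAt.differentiableWithinAt
  have hquot : (fun w => (F w - P w) / w ^ n) =ᶠ[𝓝 z] H := by
    filter_upwards [eventually_ne_nhds hz0] with w hw
    rw [hFPH w]
    field_simp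
    ring
  refine (DifferentiableAt.congr_of_eventuallyEq ?_ hquot.symm).differentiableWithinAt
  have hP : Differentiable ℂ P := by fun_prop
  exact ((hF.differentiableAt (hU.mem_nhds hz)).sub (hP z)).div (by fun_prop) (pow_ne_zero _ hz0)

theorem exists_eq_add_sq_mul_of_deriv_eq_one {ψ : ℂ → ℂ} {U : Set ℂ} (hU : IsOpen U)
    (h0U : (0 : ℂ) ∈ U) (hψ : DifferentiableOn ℂ ψ U) (h0 : ψ 0 = 0) (h1 : deriv ψ 0 = 1) :
    ∃ σ : ℂ → ℂ, DifferentiableOn ℂ σ U ∧ ∀ w, ψ w = w + w ^ 2 * σ w := by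
  obtain ⟨σ, hσ, hψσ⟩ := hψ.exists_eq_sum_add_pow_mul hU h0U 2
  refine ⟨σ, hσ, fun w => ?_⟩
  simpa [Finset.sum_range_succ, h0, h1] using hψσ w

theorem norm_iteratedDeriv_div_factorial_le {F : ℂ → ℂ} {R B : ℝ} (hR : 0 < R)
    (hF : DifferentiableOn ℂ F (closedBall 0 R)) (hB : ∀ z ∈ sphere (0 : ℂ) R, ‖F z‖ ≤ B)
    (n : ℕ) : ‖iteratedDeriv n F 0 / (n ! : ℂ)‖ ≤ B / R ^ n := by
  have h := Complex.norm_iteratedDeriv_le_of_forall_mem_sphere_norm_le n hR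
    (hF.diffContOnCl_ball subset_rfl) hB
  rw [norm_div, Complex.norm_natCast, div_le_iff₀ (by positivity)]
  calc ‖iteratedDeriv n F 0‖ ≤ n ! * B / R ^ n := h
    _ = B / R ^ n * n ! := by ring

theorem norm_le_of_forall_mem_sphere_norm_le {F : ℂ → ℂ} {R B : ℝ} (hR : 0 < R)
    (hF : DifferentiableOn ℂ F (closedBall 0 R)) (hB : ∀ z ∈ sphere (0 : ℂ) R, ‖F z‖ ≤ B)
    {z : ℂ} (hz : z ∈ closedBall 0 R) : ‖F z‖ ≤ B := by
  refine Complex.norm_le_of_forall_mem_frontier_norm_le isBounded_ball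
    (hF.diffContOnCl_ball subset_rfl) ?_ ?_
  · rwa [frontier_ball _ hR.ne']
  · rwa [closure_ball _ hR.ne']

theorem tendsto_one_add_mul_mul_pow {θ C : ℝ} (hθ0 : 0 ≤ θ) (hθ1 : θ < 1) :
    Tendsto (fun q : ℕ => (1 + q * C) * θ ^ q) atTop (𝓝 0) := by
  have h := (tendsto_pow_atTop_nhds_zero_of_lt_one hθ0 hθ1).add
    ((tendsto_self_mul_const_pow_of_lt_one hθ0 hθ1).const_mul C)
  simp only [add_zero, mul_zero] at h
  exact h.congr fun q => by ring

def psiPowSpan (ψ : ℂ → ℂ) (N : ℕ) : Submodule ℂ (ℂ → ℂ) :=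
  Submodule.span ℂ ((fun k z => ψ (z ^ k)) '' Ici N)

section PsiPowSpan

variable {ψ σ : ℂ → ℂ} {N : ℕ} {ρ M : ℝ}

theorem comp_pow_mem_psiPowSpan {k : ℕ} (hk : N ≤ k) : (fun z => ψ (z ^ k)) ∈ psiPowSpan ψ N :=
  Submodule.subset_span ⟨k, hk, rfl⟩

theorem exists_sum_of_mem_psiPowSpan {F : ℂ → ℂ} (hF : F ∈ psiPowSpan ψ N) :
    ∃ (s : Finset ℕ) (c : ℕ → ℂ), (∀ k ∈ s, N ≤ k) ∧ ∀ z, F z = ∑ k ∈ s, c k * ψ (z ^ k) := by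
  obtain ⟨l, hl, rfl⟩ := (Finsupp.mem_span_image_iff_linearCombination ℂ).mp hF
  refine ⟨l.support, l, fun k hk => hl hk, fun z => ?_⟩
  simp [Finsupp.linearCombination_apply, Finsupp.sum, Finset.sum_apply]

theorem norm_le_of_eq_add_sq_mul (hψσ : ∀ w, ψ w = w + w ^ 2 * σ w) (hρ1 : ρ ≤ 1)
    (hM : ∀ w ∈ closedBall (0 : ℂ) ρ, ‖σ w‖ ≤ M) {w : ℂ} (hw : w ∈ closedBall 0 ρ) :
    ‖ψ w‖ ≤ (1 + M) * ‖w‖ := by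
  have hw1 : ‖w‖ ≤ 1 := (mem_closedBall_zero_iff.mp hw).trans hρ1
  have hM0 : 0 ≤ M := (norm_nonneg _).trans (hM w hw)
  calc ‖ψ w‖ ≤ ‖w‖ + ‖w‖ ^ 2 * ‖σ w‖ := by
        rw [hψσ, ← norm_pow, ← norm_mul]; exact norm_add_le _ _
    _ ≤ (1 + M) * ‖w‖ := by
        nlinarith [mul_le_mul_of_nonneg_left (hM w hw) (sq_nonneg ‖w‖),
          mul_nonneg (mul_nonneg (norm_nonneg w) (sub_nonneg.2 hw1)) hM0]

theorem pow_mul_sub_eq_sum_comp_pow (hψσ : ∀ w, ψ w = w + w ^ 2 * σ w) {u v : ℂ → ℂ}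
    {b : ℕ → ℂ} {p : ℕ} (huv : ∀ z, u z = ∑ j ∈ range p, b j * z ^ j + z ^ p * v z) (z : ℂ) :
    z ^ p * u z - z ^ (2 * p) * (v z - ∑ j ∈ range p, b j * z ^ (2 * j) * σ (z ^ (p + j))) =
      ∑ j ∈ range p, b j * ψ (z ^ (p + j)) := by
  have hsplit : ∑ j ∈ range p, b j * ψ (z ^ (p + j)) = z ^ p * ∑ j ∈ range p, b j * z ^ j +
      z ^ (2 * p) * ∑ j ∈ range p, b j * z ^ (2 * j) * σ (z ^ (p + j)) := by
    simp only [hψσ, Finset.mul_sum, ← Finset.sum_add_distrib]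
    exact Finset.sum_congr rfl fun j _ => by ring
  rw [hsplit, huv]
  ring

theorem norm_sum_comp_pow_le (hψσ : ∀ w, ψ w = w + w ^ 2 * σ w) (hρ0 : 0 < ρ) (hρ1 : ρ ≤ 1)
    (hM : ∀ w ∈ closedBall (0 : ℂ) ρ, ‖σ w‖ ≤ M) {b : ℕ → ℂ} {B : ℝ}
    (hb : ∀ j, ‖b j‖ ≤ B / ρ ^ j) {p : ℕ} {z : ℂ} (hz : z ∈ sphere 0 ρ) :
    ‖∑ j ∈ range p, b j * ψ (z ^ (p + j))‖ ≤ p * (1 + M) * B * ρ ^ p := by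
  have hzρ : ‖z‖ = ρ := mem_sphere_zero_iff_norm.mp hz
  have hterm : ∀ j ∈ range p, ‖b j * ψ (z ^ (p + j))‖ ≤ (1 + M) * B * ρ ^ p := by
    intro j hj
    have hpj : p + j ≠ 0 := by simp at hj; omega
    have hmem : z ^ (p + j) ∈ closedBall (0 : ℂ) ρ := by
      rw [mem_closedBall_zero_iff, norm_pow, hzρ]; exact pow_le_of_le_one hρ0.le hρ1 hpj
    have hψ := norm_le_of_eq_add_sq_mul hψσ hρ1 hM hmem
    rw [norm_pow, hzρ] at hψ
    calc ‖b j * ψ (z ^ (p + j))‖ ≤ B / ρ ^ j * ((1 + M) * ρ ^ (p + j)) := by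
          rw [norm_mul]; gcongr
          · exact (norm_nonneg _).trans (hb j)
          · exact hb j
      _ = (1 + M) * B * ρ ^ p := by field_simp; ring
  calc ‖∑ j ∈ range p, b j * ψ (z ^ (p + j))‖ ≤ ∑ j ∈ range p, (1 + M) * B * ρ ^ p :=
        norm_sum_le_of_le _ hterm
    _ = p * (1 + M) * B * ρ ^ p := by simp; ring

theorem exists_eq_sum_add_pow_mul_of_forall_mem_sphere_norm_le {u : ℂ → ℂ}
    (hu : DifferentiableOn ℂ u (ball 0 1)) (hρ0 : 0 < ρ) (hρ1 : ρ < 1) {B : ℝ}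
    (hB : ∀ z ∈ sphere (0 : ℂ) ρ, ‖u z‖ ≤ B) (n : ℕ) :
    ∃ (b : ℕ → ℂ) (v : ℂ → ℂ), DifferentiableOn ℂ v (ball 0 1) ∧
      (∀ z, u z = ∑ j ∈ range n, b j * z ^ j + z ^ n * v z) ∧ ∀ j, ‖b j‖ ≤ B / ρ ^ j := by
  obtain ⟨v, hv, huv⟩ := hu.exists_eq_sum_add_pow_mul isOpen_ball (mem_ball_self one_pos) n
  exact ⟨_, v, hv, huv,
    norm_iteratedDeriv_div_factorial_le hρ0 (hu.mono (closedBall_subset_ball hρ1)) hB⟩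

def HasPsiRemainder (ψ g : ℂ → ℂ) (N p : ℕ) (ρ B : ℝ) : Prop :=
  ∃ u : ℂ → ℂ, DifferentiableOn ℂ u (ball 0 1) ∧
    (fun z => z ^ N * g z - z ^ p * u z) ∈ psiPowSpan ψ N ∧ ∀ z ∈ sphere (0 : ℂ) ρ, ‖u z‖ ≤ B

theorem hasPsiRemainder_self {g : ℂ → ℂ} (hg : DifferentiableOn ℂ g (ball 0 1)) {B : ℝ}
    (hB : ∀ z ∈ sphere (0 : ℂ) ρ, ‖g z‖ ≤ B) : HasPsiRemainder ψ g N N ρ B :=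
  ⟨g, hg, by simp_rw [sub_self]; exact (psiPowSpan ψ N).zero_mem, hB⟩

namespace HasPsiRemainder

variable {g : ℂ → ℂ} {p : ℕ} {B : ℝ}

theorem mono (h : HasPsiRemainder ψ g N p ρ B) {B' : ℝ} (hB : B ≤ B') :
    HasPsiRemainder ψ g N p ρ B' :=
  let ⟨u, hu, hmem, hbound⟩ := h
  ⟨u, hu, hmem, fun z hz => (hbound z hz).trans hB⟩

theorem nonneg (h : HasPsiRemainder ψ g N p ρ B) (hρ0 : 0 ≤ ρ) : 0 ≤ B :=
  let ⟨_, _, _, hB⟩ := h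
  let ⟨z, hz⟩ := NormedSpace.sphere_nonempty.mpr hρ0
  (norm_nonneg _).trans (hB z hz)

theorem double (hσ : DifferentiableOn ℂ σ (ball 0 1)) (hψσ : ∀ w, ψ w = w + w ^ 2 * σ w)
    (hρ0 : 0 < ρ) (hρ1 : ρ < 1) (hM : ∀ w ∈ closedBall (0 : ℂ) ρ, ‖σ w‖ ≤ M)
    (h : HasPsiRemainder ψ g N p ρ B) (hNp : N ≤ p) :
    HasPsiRemainder ψ g N (2 * p) ρ ((1 + p * (1 + M)) / ρ ^ p * B) := by
  obtain ⟨u, hu, hmem, hB⟩ := h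
  obtain ⟨b, v, hv, huv, hb⟩ :=
    exists_eq_sum_add_pow_mul_of_forall_mem_sphere_norm_le hu hρ0 hρ1 hB p
  set u' : ℂ → ℂ := fun z => v z - ∑ j ∈ range p, b j * z ^ (2 * j) * σ (z ^ (p + j))
  have hid : ∀ z, z ^ p * u z - z ^ (2 * p) * u' z = ∑ j ∈ range p, b j * ψ (z ^ (p + j)) :=
    pow_mul_sub_eq_sum_comp_pow hψσ huv
  refine ⟨u', ?_, ?_, fun z hz => ?_⟩
  · refine hv.sub (DifferentiableOn.fun_sum fun j hj => ?_)
    have hpj : p + j ≠ 0 := by simp at hj; omega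
    refine (DifferentiableOn.const_mul (by fun_prop) _).mul (hσ.comp (by fun_prop) fun z hz => ?_)
    simpa [norm_pow] using pow_lt_one₀ (norm_nonneg z) (mem_ball_zero_iff.mp hz) hpj
  · have hstep : (fun z => z ^ N * g z - z ^ (2 * p) * u' z) =
        (fun z => z ^ N * g z - z ^ p * u z) + ∑ j ∈ range p, b j • fun z => ψ (z ^ (p + j)) := by
      funext z
      simp only [Pi.add_apply, Finset.sum_apply, Pi.smul_apply, smul_eq_mul, ← hid z]
      ring
    rw [hstep]
    exact add_mem hmem
      (sum_mem fun j _ => Submodule.smul_mem _ _ (comp_pow_mem_psiPowSpan (by omega)))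
  · have hzρ : ‖z‖ = ρ := mem_sphere_zero_iff_norm.mp hz
    have key : ρ ^ p * ‖u' z‖ ≤ (1 + p * (1 + M)) * B :=
      calc ρ ^ p * ‖u' z‖ = ‖z ^ p * u z - ∑ j ∈ range p, b j * ψ (z ^ (p + j))‖ / ρ ^ p := by
            rw [← hid z, sub_sub_cancel, norm_mul, norm_pow, hzρ, pow_mul']
            field_simp
        _ ≤ (ρ ^ p * B + p * (1 + M) * B * ρ ^ p) / ρ ^ p := by
            gcongr
            refine (norm_sub_le _ _).trans
              (add_le_add ?_ (norm_sum_comp_pow_le hψσ hρ0 hρ1.le hM hb hz))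
            rw [norm_mul, norm_pow, hzρ]
            exact mul_le_mul_of_nonneg_left (hB z hz) (by positivity)
        _ = (1 + p * (1 + M)) * B := by field_simp
    rw [div_mul_eq_mul_div, le_div_iff₀ (by positivity)]
    linarith

theorem exists_pow_two_mul (hσ : DifferentiableOn ℂ σ (ball 0 1))
    (hψσ : ∀ w, ψ w = w + w ^ 2 * σ w) (hρ0 : 0 < ρ) (hρ1 : ρ < 1)
    (hM : ∀ w ∈ closedBall (0 : ℂ) ρ, ‖σ w‖ ≤ M) (h : HasPsiRemainder ψ g N N ρ B) (n : ℕ) :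
    ∃ B', HasPsiRemainder ψ g N (2 ^ n * N) ρ B' := by
  induction n with
  | zero => exact ⟨B, by simpa using h⟩
  | succ n ih =>
    obtain ⟨B', h'⟩ := ih
    rw [pow_succ, mul_comm _ 2, mul_assoc]
    exact ⟨_, h'.double hσ hψσ hρ0 hρ1 hM (Nat.le_mul_of_pos_left N (by positivity))⟩

theorem exists_le_div_pow (hσ : DifferentiableOn ℂ σ (ball 0 1))
    (hψσ : ∀ w, ψ w = w + w ^ 2 * σ w) (hρ0 : 0 < ρ) (hρ1 : ρ < 1)
    (hM : ∀ w ∈ closedBall (0 : ℂ) ρ, ‖σ w‖ ≤ M) {r Q : ℝ} (hr : 0 < r) (hQ : 0 ≤ Q)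
    (h : HasPsiRemainder ψ g N p ρ (Q / r ^ p)) (hNp : N ≤ p)
    (hhalf : ∀ q ≥ p, (1 + q * (1 + M)) * (r / ρ) ^ q ≤ 1 / 2) {δ : ℝ} (hδ : 0 < δ) :
    ∃ q, N ≤ q ∧ HasPsiRemainder ψ g N q ρ (δ / r ^ q) := by
  have hiter : ∀ m : ℕ, HasPsiRemainder ψ g N (2 ^ m * p) ρ (Q / 2 ^ m / r ^ (2 ^ m * p)) := by
    intro m
    induction m with
    | zero => simpa using h
    | succ m ih =>
      set q := 2 ^ m * p
      have hpq : p ≤ q := Nat.le_mul_of_pos_left p (by positivity)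
      have hQm : 0 ≤ Q / 2 ^ m := by positivity
      rw [pow_succ, mul_comm _ 2, mul_assoc]
      refine (ih.double hσ hψσ hρ0 hρ1 hM (hNp.trans hpq)).mono ?_
      calc (1 + q * (1 + M)) / ρ ^ q * (Q / 2 ^ m / r ^ q)
          = (1 + q * (1 + M)) * (r / ρ) ^ q * (Q / 2 ^ m) / r ^ (2 * q) := by
            rw [div_pow]; field_simp; ring
        _ ≤ 1 / 2 * (Q / 2 ^ m) / r ^ (2 * q) := by gcongr; exact hhalf q hpq
        _ = Q / 2 ^ (m + 1) / r ^ (2 * q) := by ring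
  obtain ⟨m, hm⟩ := exists_nat_gt (Q / δ)
  refine ⟨2 ^ m * p, hNp.trans (Nat.le_mul_of_pos_left p (by positivity)), (hiter m).mono ?_⟩
  have hQδ : Q / 2 ^ m ≤ δ := by
    have hm2 : (m : ℝ) < 2 ^ m := by exact_mod_cast Nat.lt_two_pow_self
    rw [div_le_iff₀ (by positivity)]
    linarith [(div_lt_iff₀ hδ).mp (hm.trans hm2)]
  gcongr

theorem exists_sum_approx {P : ℕ} {r : ℝ} (h : HasPsiRemainder ψ g N P ρ B) (hNP : N ≤ P)
    (hg : DifferentiableOn ℂ g (ball 0 1)) (hρ0 : 0 < ρ) (hρ1 : ρ < 1) (hrρ : r ≤ ρ) :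
    ∃ (s : Finset ℕ) (c : ℕ → ℂ) (h : ℂ → ℂ), (∀ k ∈ s, N ≤ k) ∧
      DifferentiableOn ℂ h (ball 0 1) ∧
      (∀ z ∈ ball (0 : ℂ) 1, z ≠ 0 → h z = ∑ k ∈ s, c k * (ψ (z ^ k) / z ^ N)) ∧
      ∀ z ∈ closedBall (0 : ℂ) r, ‖g z - h z‖ ≤ r ^ (P - N) * B := by
  obtain ⟨u, hu, hmem, hB⟩ := h
  obtain ⟨s, c, hs, hsum⟩ := exists_sum_of_mem_psiPowSpan hmem
  refine ⟨s, c, fun z => g z - z ^ (P - N) * u z, hs, by fun_prop, fun z _ hz0 => ?_,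
    fun z hz => ?_⟩
  · simp_rw [← mul_div_assoc, ← Finset.sum_div, ← hsum z]
    rw [eq_div_iff (pow_ne_zero N hz0), ← pow_sub_mul_pow z hNP]
    ring
  · have hzr : ‖z‖ ≤ r := mem_closedBall_zero_iff.mp hz
    have huz : ‖u z‖ ≤ B := norm_le_of_forall_mem_sphere_norm_le hρ0
      (hu.mono (closedBall_subset_ball hρ1)) hB (closedBall_subset_closedBall hrρ hz)
    rw [sub_sub_cancel, norm_mul, norm_pow]
    exact mul_le_mul (pow_le_pow_left₀ (norm_nonneg z) hzr _) huz (norm_nonneg _)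
      (pow_nonneg ((norm_nonneg z).trans hzr) _)

end HasPsiRemainder

theorem exists_psi_sum_approx {g : ℂ → ℂ} (hσ : DifferentiableOn ℂ σ (ball 0 1))
    (hψσ : ∀ w, ψ w = w + w ^ 2 * σ w) (hN : 1 ≤ N) (hg : DifferentiableOn ℂ g (ball 0 1))
    {r : ℝ} (hr0 : 0 < r) (hr1 : r < 1) {ε : ℝ} (hε : 0 < ε) :
    ∃ (s : Finset ℕ) (c : ℕ → ℂ) (h : ℂ → ℂ), (∀ k ∈ s, N ≤ k) ∧
      DifferentiableOn ℂ h (ball 0 1) ∧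
      (∀ z ∈ ball (0 : ℂ) 1, z ≠ 0 → h z = ∑ k ∈ s, c k * (ψ (z ^ k) / z ^ N)) ∧
      ∀ z ∈ closedBall (0 : ℂ) r, ‖g z - h z‖ < ε := by
  obtain ⟨ρ, hrρ, hρ1⟩ := exists_between hr1
  have hρ0 : 0 < ρ := hr0.trans hrρ
  obtain ⟨M, hM⟩ := (isCompact_closedBall (0 : ℂ) ρ).exists_bound_of_continuousOn
    (hσ.continuousOn.mono (closedBall_subset_ball hρ1))
  obtain ⟨B, hB⟩ := (isCompact_sphere (0 : ℂ) ρ).exists_bound_of_continuousOn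
    (hg.continuousOn.mono (sphere_subset_closedBall.trans (closedBall_subset_ball hρ1)))
  obtain ⟨p, hp⟩ := eventually_atTop.mp <| (tendsto_one_add_mul_mul_pow (C := 1 + M)
    (div_nonneg hr0.le hρ0.le) ((div_lt_one hρ0).mpr hrρ)).eventually (ge_mem_nhds one_half_pos)
  have hpP : p ≤ 2 ^ p * N := Nat.lt_two_pow_self.le.trans (Nat.le_mul_of_pos_right _ hN)
  obtain ⟨B', h'⟩ := (hasPsiRemainder_self hg hB).exists_pow_two_mul hσ hψσ hρ0 hρ1 hM p
  obtain ⟨q, hNq, hq⟩ := HasPsiRemainder.exists_le_div_pow hσ hψσ hρ0 hρ1 hM hr0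
    (Q := B' * r ^ (2 ^ p * N)) (mul_nonneg (h'.nonneg hρ0.le) (by positivity))
    (by rwa [mul_div_cancel_right₀ _ (pow_ne_zero _ hr0.ne')])
    (Nat.le_mul_of_pos_left N (by positivity)) (fun q hq => hp q (hpP.trans hq))
    (δ := ε * r ^ N / 2) (by positivity)
  obtain ⟨s, c, h, hs, hh, hsum, hbound⟩ := hq.exists_sum_approx hNq hg hρ0 hρ1 hrρ.le
  refine ⟨s, c, h, hs, hh, hsum, fun z hz => (hbound z hz).trans_lt ?_⟩
  rw [pow_sub₀ _ hr0.ne' hNq]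
  field_simp
  linarith

end PsiPowSpan

/-- Let `ψ` be holomorphic on the open unit disk `D` with `ψ(0) = 0` and `ψ'(0) = 1`.  Then
the linear span of the functions `{ψ(z^k)/z^N : k ≥ N}` (more precisely, of their holomorphic
extensions across `0`) is dense in the space of holomorphic functions on `D` for the topology
of uniform convergence on compact sets. -/
theorem span_psi_pow_div_dense (ψ : ℂ → ℂ)
    (hψ : DifferentiableOn ℂ ψ (Metric.ball (0 : ℂ) 1))
    (h0 : ψ 0 = 0) (h1 : deriv ψ 0 = 1) (N : ℕ) (hN : 1 ≤ N) :
    ∀ g : ℂ → ℂ, DifferentiableOn ℂ g (Metric.ball (0 : ℂ) 1) →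
      ∀ K : Set ℂ, IsCompact K → K ⊆ Metric.ball (0 : ℂ) 1 →
        ∀ ε : ℝ, 0 < ε →
          ∃ (s : Finset ℕ) (c : ℕ → ℂ) (h : ℂ → ℂ),
            (∀ k ∈ s, N ≤ k) ∧
            DifferentiableOn ℂ h (Metric.ball (0 : ℂ) 1) ∧
            (∀ z ∈ Metric.ball (0 : ℂ) 1, z ≠ 0 →
              h z = ∑ k ∈ s, c k * (ψ (z ^ k) / z ^ N)) ∧
            ∀ z ∈ K, ‖g z - h z‖ < ε := by
  intro g hg K hK hK1 ε hε
  obtain ⟨σ, hσ, hψσ⟩ :=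
    exists_eq_add_sq_mul_of_deriv_eq_one isOpen_ball (mem_ball_self one_pos) hψ h0 h1
  obtain ⟨r, hr1, hKr⟩ := exists_lt_subset_ball hK.isClosed hK1
  obtain ⟨s, c, h, hs, hh, hsum, happrox⟩ := exists_psi_sum_approx hσ hψσ hN hg
    (one_half_pos.trans_le (le_max_right r _)) (max_lt hr1 one_half_lt_one) hε
  exact ⟨s, c, h, hs, hh, hsum, fun z hz =>
    happrox z (ball_subset_closedBall (ball_subset_ball (le_max_left _ _) (hKr hz)))⟩
end
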